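/- For every open set O ⊆ X_A, the support P_{Γ_O} := closure of the union over η ∈ Γ_O of the interiors of P_η equals the closure of O. In particular, if O is clopen then P_{Γ_O} = O. -/
import Mathlib


open Set

instance homeoGroup {α : Type*} [TopologicalSpace α] : Group (α ≃ₜ α) where
  mul a b := b.trans a
  one := Homeomorph.refl α
  inv := Homeomorph.symm
  mul_assoc _ _ _ := Homeomorph.ext fun _ => rfl
  one_mul _ := Homeomorph.ext fun _ => rfl
  mul_one _ := Homeomorph.ext fun _ => rfl
  inv_mul_cancel a := Homeomorph.ext fun x => a.symm_apply_apply x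

@[simp] theorem homeo_mul_apply {α : Type*} [TopologicalSpace α] (a b : α ≃ₜ α) (x : α) :
    (a * b) x = a (b x) := rfl

@[simp] theorem homeo_inv_apply {α : Type*} [TopologicalSpace α] (a : α ≃ₜ α) (x : α) :
    a⁻¹ x = a.symm x := rfl

/-- The one-sided shift space `X_A` of a 0-1 matrix `A`. -/
abbrev ShiftSpace {N : ℕ} (A : Fin N → Fin N → Bool) : Type :=
  {x : ℕ → Fin N // ∀ n, A (x n) (x (n + 1)) = true}

/-- The one-sided shift `σ_A`. -/
def shiftMap {N : ℕ} (A : Fin N → Fin N → Bool) (x : ShiftSpace A) : ShiftSpace A :=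
  ⟨fun n => x.1 (n + 1), fun n => x.2 (n + 1)⟩

/-- Irreducibility of the matrix `A`: any two indices are connected by a path. -/
def MatrixIrreducible {N : ℕ} (A : Fin N → Fin N → Bool) : Prop :=
  ∀ i j : Fin N, ∃ n : ℕ, 0 < n ∧ ∃ w : ℕ → Fin N, w 0 = i ∧ w n = j ∧
    ∀ k < n, A (w k) (w (k + 1)) = true

/-- Condition (I): the shift space is homeomorphic to the Cantor set. -/
def ConditionI {N : ℕ} (A : Fin N → Fin N → Bool) : Prop :=
  Nonempty (ShiftSpace A ≃ₜ (ℕ → Bool))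

/-- The continuous full group `Γ_A`. -/
def fullGroup {N : ℕ} (A : Fin N → Fin N → Bool) :
    Subgroup (ShiftSpace A ≃ₜ ShiftSpace A) where
  carrier := {τ | ∃ k l : ShiftSpace A → ℕ, Continuous k ∧ Continuous l ∧
    ∀ x, (shiftMap A)^[k x] (τ x) = (shiftMap A)^[l x] x}
  one_mem' := ⟨fun _ => 0, fun _ => 0, continuous_const, continuous_const, fun _ => rfl⟩
  mul_mem' := by
    rintro a b ⟨k1, l1, hk1, hl1, h1⟩ ⟨k2, l2, hk2, hl2, h2⟩
    refine ⟨fun x => k2 x + k1 (b x), fun x => l1 (b x) + l2 x,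
      hk2.add (hk1.comp b.continuous), (hl1.comp b.continuous).add hl2, fun x => ?_⟩
    calc (shiftMap A)^[k2 x + k1 (b x)] ((a * b) x)
        = (shiftMap A)^[k2 x] ((shiftMap A)^[k1 (b x)] (a (b x))) :=
          Function.iterate_add_apply _ _ _ _
      _ = (shiftMap A)^[k2 x] ((shiftMap A)^[l1 (b x)] (b x)) := by rw [h1]
      _ = (shiftMap A)^[l1 (b x)] ((shiftMap A)^[k2 x] (b x)) := by
          rw [← Function.iterate_add_apply, Nat.add_comm, Function.iterate_add_apply]
      _ = (shiftMap A)^[l1 (b x)] ((shiftMap A)^[l2 x] x) := by rw [h2]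
      _ = (shiftMap A)^[l1 (b x) + l2 x] x := (Function.iterate_add_apply _ _ _ _).symm
  inv_mem' := by
    rintro a ⟨k, l, hk, hl, h⟩
    refine ⟨fun x => l (a⁻¹ x), fun x => k (a⁻¹ x),
      hl.comp a.symm.continuous, hk.comp a.symm.continuous, fun x => ?_⟩
    have := (h (a⁻¹ x)).symm
    rwa [show a (a⁻¹ x) = x from a.apply_symm_apply x] at this

/-- The local subgroup `Γ_O` of `Γ_A` associated to a set `O`. -/
def localGroup {N : ℕ} (A : Fin N → Fin N → Bool) (O : Set (ShiftSpace A)) :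
    Subgroup (ShiftSpace A ≃ₜ ShiftSpace A) where
  carrier := {γ | γ ∈ fullGroup A ∧ ∀ x ∉ O, γ x = x}
  one_mem' := ⟨(fullGroup A).one_mem, fun _ _ => rfl⟩
  mul_mem' := by
    rintro a b ⟨haΓ, ha⟩ ⟨hbΓ, hb⟩
    exact ⟨mul_mem haΓ hbΓ, fun x hx => by
      show a (b x) = x
      rw [hb x hx, ha x hx]⟩
  inv_mem' := by
    rintro a ⟨haΓ, ha⟩
    refine ⟨inv_mem haΓ, fun x hx => ?_⟩
    conv_lhs => rw [← ha x hx]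
    exact a.symm_apply_apply x

/-- The commutant in `Γ_A` of a set of homeomorphisms. -/
def commutant {N : ℕ} (A : Fin N → Fin N → Bool)
    (S : Set (ShiftSpace A ≃ₜ ShiftSpace A)) : Set (ShiftSpace A ≃ₜ ShiftSpace A) :=
  {ξ | ξ ∈ fullGroup A ∧ ∀ γ ∈ S, ξ * γ = γ * ξ}

/-- The support `P_γ` of a homeomorphism `γ`. -/
def suppHomeo {N : ℕ} {A : Fin N → Fin N → Bool} (γ : ShiftSpace A ≃ₜ ShiftSpace A) :
    Set (ShiftSpace A) :=
  closure {x | γ x ≠ x}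

/-- The support `P_H` of a set of homeomorphisms. -/
def suppSet {N : ℕ} {A : Fin N → Fin N → Bool} (H : Set (ShiftSpace A ≃ₜ ShiftSpace A)) :
    Set (ShiftSpace A) :=
  closure (⋃ η ∈ H, interior (suppHomeo η))


section Aux
variable {N : ℕ} {A : Fin N → Fin N → Bool}

theorem shift_iter (x : ShiftSpace A) (n i : ℕ) :
    ((shiftMap A)^[n] x).1 i = x.1 (n + i) := by
  induction n generalizing x with
  | zero => simp
  | succ n ih =>
    rw [Function.iterate_succ_apply, ih]
    show x.1 (n + (i + 1)) = x.1 (n + 1 + i)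
    ring_nf

def cyl (y : ShiftSpace A) (p : ℕ) : Set (ShiftSpace A) := {t | ∀ i ≤ p, t.1 i = y.1 i}

theorem self_mem_cyl (y : ShiftSpace A) (p : ℕ) : y ∈ cyl y p := fun _ _ => rfl

theorem isClopen_cyl (y : ShiftSpace A) (p : ℕ) : IsClopen (cyl y p) := by
  have hc : Continuous fun t : ShiftSpace A => fun i : Fin (p + 1) => t.1 i :=
    continuous_pi fun i => (continuous_apply (i : ℕ)).comp continuous_subtype_val
  have : cyl y p = (fun t : ShiftSpace A => fun i : Fin (p + 1) => t.1 i) ⁻¹'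
      {fun i : Fin (p + 1) => y.1 i} := by
    ext t
    simp only [cyl, mem_setOf_eq, mem_preimage, mem_singleton_iff, funext_iff]
    constructor
    · intro h i; exact h i (Nat.lt_succ_iff.mp i.2)
    · intro h i hi; exact h ⟨i, Nat.lt_succ_iff.mpr hi⟩
  rw [this]
  exact (isClopen_discrete _).preimage hc

theorem cyl_basis (x : ShiftSpace A) {U : Set (ShiftSpace A)} (hU : IsOpen U) (hx : x ∈ U) :
    ∃ n, cyl x n ⊆ U := by
  obtain ⟨V, hV, rfl⟩ := isOpen_induced_iff.mp hU
  obtain ⟨I, u, hIu, hsub⟩ := isOpen_pi_iff.mp hV x.1 hx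
  refine ⟨I.sup id, fun t ht => ?_⟩
  refine hsub fun i hi => ?_
  rw [ht i (Finset.le_sup (f := id) (Finset.mem_coe.mp hi))]
  exact (hIu i (Finset.mem_coe.mp hi)).2

theorem cantor_perfect (f : ℕ → Bool) {U : Set (ℕ → Bool)} (hU : IsOpen U) (hf : f ∈ U) :
    ∃ g ∈ U, g ≠ f := by
  obtain ⟨I, u, hIu, hsub⟩ := isOpen_pi_iff.mp hU f hf
  set n := I.sup id + 1 with hn
  have hnI : n ∉ I := fun h => by
    have := Finset.le_sup (f := id) h
    simp only [id_eq, hn] at this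
    omega
  refine ⟨Function.update f n (!f n), hsub fun i hi => ?_, fun h => ?_⟩
  · have hin : i ≠ n := fun he => hnI (by simpa [he] using hi)
    rw [Function.update_of_ne hin]
    exact (hIu i (Finset.mem_coe.mp hi)).2
  · have := congrFun h n
    simp [Function.update_self] at this

theorem shift_perfect (hI : ConditionI A) (x : ShiftSpace A) {U : Set (ShiftSpace A)}
    (hU : IsOpen U) (hx : x ∈ U) : ∃ z ∈ U, z ≠ x := by
  obtain ⟨e⟩ := hI
  obtain ⟨g, hg, hne⟩ := cantor_perfect (e x) (hU.preimage e.symm.continuous)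
    (by simpa using hx)
  exact ⟨e.symm g, hg, fun h => hne (by rw [← h]; simp)⟩

theorem exists_point_start (hA : MatrixIrreducible A) (c : Fin N) :
    ∃ τ : ShiftSpace A, τ.1 0 = c := by
  obtain ⟨L, hL, w, hw0, hwL, hwpath⟩ := hA c c
  have key : ∀ k, A (w (k % L)) (w ((k + 1) % L)) = true := by
    intro k
    have hr : k % L < L := Nat.mod_lt k hL
    have h1 : (k + 1) % L = (k % L + 1) % L := (Nat.mod_add_mod k L 1).symm
    rcases Nat.lt_or_ge (k % L + 1) L with h | h
    · rw [h1, Nat.mod_eq_of_lt h]; exact hwpath _ hr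
    · have h2 : k % L + 1 = L := by omega
      rw [h1, h2, Nat.mod_self, hw0, ← hwL]
      have := hwpath (k % L) hr
      rwa [h2] at this
  exact ⟨⟨fun k => w (k % L), key⟩, by simp [Nat.zero_mod, hw0]⟩
end Aux
section Swap
variable {N : ℕ} {A : Fin N → Fin N → Bool}

theorem exists_extension (hA : MatrixIrreducible A) (word : ℕ → Fin N) (M : ℕ)
    (hw : ∀ k < M, A (word k) (word (k + 1)) = true) :
    ∃ y : ShiftSpace A, ∀ k ≤ M, y.1 k = word k := by
  obtain ⟨τ, hτ⟩ := exists_point_start hA (word M)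
  refine ⟨⟨fun k => if k < M then word k else τ.1 (k - M), fun k => ?_⟩, fun k hk => ?_⟩
  · by_cases h1 : k + 1 < M
    · simp only [if_pos (by omega : k < M), if_pos h1]
      exact hw k (by omega)
    · by_cases h2 : k < M
      · have hkM : k + 1 = M := by omega
        simp only [if_pos h2, if_neg h1]
        have : τ.1 (k + 1 - M) = word (k + 1) := by
          rw [hkM, Nat.sub_self, hτ]
        rw [this]
        exact hw k (by omega)
      · simp only [if_neg h1, if_neg h2]
        have : k + 1 - M = (k - M) + 1 := by omega
        rw [this]
        exact τ.2 (k - M)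
  · by_cases h : k < M
    · simp [h]
    · have : k = M := by omega
      simp [this, hτ]

/-- the word obtained by replacing the first `q+1` symbols by those of `z` -/
def replWord (z : ShiftSpace A) (q p : ℕ) (t : ShiftSpace A) : ℕ → Fin N :=
  fun k => if k ≤ q then z.1 k else t.1 (p + (k - q))

theorem replWord_valid (z : ShiftSpace A) (q p : ℕ) (t : ShiftSpace A)
    (hend : z.1 q = t.1 p) (k : ℕ) :
    A (replWord z q p t k) (replWord z q p t (k + 1)) = true := by
  unfold replWord
  by_cases h1 : k + 1 ≤ q
  · rw [if_pos (by omega), if_pos h1]; exact z.2 k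
  · by_cases h2 : k ≤ q
    · have hkq : k = q := by omega
      have h3 : p + (k + 1 - q) = p + 1 := by omega
      rw [if_pos h2, if_neg h1, h3, hkq, hend]
      exact t.2 p
    · rw [if_neg h2, if_neg h1]
      have : p + (k + 1 - q) = p + (k - q) + 1 := by omega
      rw [this]
      exact t.2 _

def replPt (z : ShiftSpace A) (q p : ℕ) (t : ShiftSpace A) (hend : z.1 q = t.1 p) :
    ShiftSpace A :=
  ⟨replWord z q p t, replWord_valid z q p t hend⟩

open Classical in
/-- the swap map -/
noncomputable def swapFun (y z : ShiftSpace A) (p q : ℕ)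
    (h1 : y.1 p = z.1 q) : ShiftSpace A → ShiftSpace A := fun t =>
  if ht : t ∈ cyl y p then replPt z q p t (by rw [← h1, ← ht p le_rfl])
  else if ht2 : t ∈ cyl z q then replPt y p q t (by rw [h1, ← ht2 q le_rfl]) else t

variable {y z : ShiftSpace A} {p q : ℕ} (h1 : y.1 p = z.1 q)
  (hd : cyl y p ∩ cyl z q = (∅ : Set (ShiftSpace A)))

open Classical in
theorem swapFun_coord (t : ShiftSpace A) :
    (swapFun y z p q h1 t).1 = if t ∈ cyl y p then replWord z q p t
      else if t ∈ cyl z q then replWord y p q t else t.1 := by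
  unfold swapFun
  split_ifs with h2 h3 <;> rfl

theorem replPt_mem_cyl (hend : z.1 q = t.1 p) : replPt z q p t hend ∈ cyl z q :=
  fun i hi => if_pos hi

theorem swapFun_mem (t : ShiftSpace A) (ht : t ∈ cyl y p) :
    swapFun y z p q h1 t ∈ cyl z q := by
  unfold swapFun
  rw [dif_pos ht]
  exact replPt_mem_cyl _

theorem swapFun_mem' (t : ShiftSpace A) (ht : t ∉ cyl y p) (ht2 : t ∈ cyl z q) :
    swapFun y z p q h1 t ∈ cyl y p := by
  unfold swapFun
  rw [dif_neg ht, dif_pos ht2]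
  exact replPt_mem_cyl _

theorem swapFun_id (t : ShiftSpace A) (ht : t ∉ cyl y p) (ht2 : t ∉ cyl z q) :
    swapFun y z p q h1 t = t := by
  unfold swapFun
  rw [dif_neg ht, dif_neg ht2]

include hd in
theorem swapFun_invol (t : ShiftSpace A) :
    swapFun y z p q h1 (swapFun y z p q h1 t) = t := by
  by_cases ht : t ∈ cyl y p
  · have hs : swapFun y z p q h1 t ∈ cyl z q := swapFun_mem h1 t ht
    have hs' : swapFun y z p q h1 t ∉ cyl y p := fun h =>
      absurd (Set.mem_inter h hs) (by rw [hd]; exact notMem_empty _)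
    apply Subtype.ext
    rw [swapFun_coord h1, if_neg hs', if_pos hs]
    funext k
    unfold replWord
    by_cases hk : k ≤ p
    · rw [if_pos hk, ht k hk]
    · rw [if_neg hk]
      rw [swapFun_coord h1, if_pos ht]
      unfold replWord
      rw [if_neg (by omega : ¬ q + (k - p) ≤ q)]
      have : p + (q + (k - p) - q) = k := by omega
      rw [this]
  · by_cases ht2 : t ∈ cyl z q
    · have hs : swapFun y z p q h1 t ∈ cyl y p := swapFun_mem' h1 t ht ht2
      apply Subtype.ext
      rw [swapFun_coord h1, if_pos hs]
      funext k
      unfold replWord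
      by_cases hk : k ≤ q
      · rw [if_pos hk, ht2 k hk]
      · rw [if_neg hk]
        rw [swapFun_coord h1, if_neg ht, if_pos ht2]
        unfold replWord
        rw [if_neg (by omega : ¬ p + (k - q) ≤ p)]
        have : q + (p + (k - q) - p) = k := by omega
        rw [this]
    · rw [swapFun_id h1 t ht ht2, swapFun_id h1 t ht ht2]

theorem continuous_coord (j : ℕ) : Continuous fun t : ShiftSpace A => t.1 j :=
  (continuous_apply j).comp continuous_subtype_val

open Classical in
theorem swapFun_continuous : Continuous (swapFun y z p q h1) := by
  rw [continuous_induced_rng]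
  have : (Subtype.val ∘ swapFun y z p q h1) = fun t =>
      if t ∈ cyl y p then replWord z q p t else if t ∈ cyl z q then replWord y p q t
      else t.1 := by
    funext t
    exact swapFun_coord h1 t
  rw [this]
  have hrw : ∀ (w : ShiftSpace A) (a b : ℕ), Continuous fun t : ShiftSpace A =>
      replWord w a b t := by
    intro w a b
    apply continuous_pi
    intro k
    unfold replWord
    by_cases hk : k ≤ a
    · simp only [if_pos hk]; exact continuous_const
    · simp only [if_neg hk]; exact continuous_coord _
  classical
  apply Continuous.if
  · intro a ha
    rw [Set.setOf_mem_eq, (isClopen_cyl y p).frontier_eq] at ha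
    exact absurd ha (notMem_empty a)
  · exact hrw z q p
  apply Continuous.if
  · intro a ha
    rw [Set.setOf_mem_eq, (isClopen_cyl z q).frontier_eq] at ha
    exact absurd ha (notMem_empty a)
  · exact hrw y p q
  · exact continuous_pi fun k => continuous_coord k

include h1 hd in
theorem swap_exists : ∃ η : ShiftSpace A ≃ₜ ShiftSpace A, η ∈ fullGroup A ∧
    (∀ t, t ∉ cyl y p ∪ cyl z q → η t = t) ∧ (∀ t ∈ cyl y p, η t ∈ cyl z q) := by
  classical
  refine ⟨⟨⟨swapFun y z p q h1, swapFun y z p q h1, swapFun_invol h1 hd,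
      swapFun_invol h1 hd⟩, swapFun_continuous h1, swapFun_continuous h1⟩,
    ⟨fun t => if t ∈ cyl y p then q + 1 else if t ∈ cyl z q then p + 1 else 0,
     fun t => if t ∈ cyl y p then p + 1 else if t ∈ cyl z q then q + 1 else 0,
     ?_, ?_, ?_⟩,
    fun t ht => swapFun_id h1 t (fun h => ht (Or.inl h)) (fun h => ht (Or.inr h)),
    fun t ht => swapFun_mem h1 t ht⟩
  · apply Continuous.if
    · intro a ha
      rw [Set.setOf_mem_eq, (isClopen_cyl y p).frontier_eq] at ha
      exact absurd ha (notMem_empty a)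
    · exact continuous_const
    apply Continuous.if
    · intro a ha
      rw [Set.setOf_mem_eq, (isClopen_cyl z q).frontier_eq] at ha
      exact absurd ha (notMem_empty a)
    · exact continuous_const
    · exact continuous_const
  · apply Continuous.if
    · intro a ha
      rw [Set.setOf_mem_eq, (isClopen_cyl y p).frontier_eq] at ha
      exact absurd ha (notMem_empty a)
    · exact continuous_const
    apply Continuous.if
    · intro a ha
      rw [Set.setOf_mem_eq, (isClopen_cyl z q).frontier_eq] at ha
      exact absurd ha (notMem_empty a)
    · exact continuous_const
    · exact continuous_const
  · intro t
    by_cases ht : t ∈ cyl y p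
    · simp only [if_pos ht]
      apply Subtype.ext
      funext i
      rw [shift_iter, shift_iter]
      show (swapFun y z p q h1 t).1 (q + 1 + i) = t.1 (p + 1 + i)
      rw [swapFun_coord h1, if_pos ht]
      unfold replWord
      rw [if_neg (by omega : ¬ q + 1 + i ≤ q)]
      have : p + (q + 1 + i - q) = p + 1 + i := by omega
      rw [this]
    · by_cases ht2 : t ∈ cyl z q
      · simp only [if_neg ht, if_pos ht2]
        apply Subtype.ext
        funext i
        rw [shift_iter, shift_iter]
        show (swapFun y z p q h1 t).1 (p + 1 + i) = t.1 (q + 1 + i)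
        rw [swapFun_coord h1, if_neg ht, if_pos ht2]
        unfold replWord
        rw [if_neg (by omega : ¬ p + 1 + i ≤ p)]
        have : q + (p + 1 + i - p) = q + 1 + i := by omega
        rw [this]
      · simp only [if_neg ht, if_neg ht2]
        show (shiftMap A)^[0] (swapFun y z p q h1 t) = (shiftMap A)^[0] t
        rw [swapFun_id h1 t ht ht2]
end Swap
theorem stmt15 {N : ℕ} (hN : 1 < N) (A : Fin N → Fin N → Bool)
    (hA : MatrixIrreducible A) (hI : ConditionI A)
    (O : Set (ShiftSpace A)) (hO : IsOpen O) :
    suppSet (↑(localGroup A O) : Set (ShiftSpace A ≃ₜ ShiftSpace A)) = closure O ∧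
    (IsClopen O →
      suppSet (↑(localGroup A O) : Set (ShiftSpace A ≃ₜ ShiftSpace A)) = O) := by
  have main : suppSet (↑(localGroup A O) : Set (ShiftSpace A ≃ₜ ShiftSpace A)) = closure O := by
    apply Set.Subset.antisymm
    · apply closure_minimal _ isClosed_closure
      refine Set.iUnion₂_subset fun η hη => ?_
      have hη' : η ∈ localGroup A O := SetLike.mem_coe.mp hη
      have hsub : {x | η x ≠ x} ⊆ O := fun x hx => by
        by_contra h
        exact hx (hη'.2 x h)
      exact interior_subset.trans (closure_mono hsub)
    · apply closure_minimal _ isClosed_closure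
      intro x hx
      show x ∈ closure _
      rw [mem_closure_iff]
      intro U hU hxU
      obtain ⟨n, hn⟩ := cyl_basis x (hO.inter hU) ⟨hx, hxU⟩
      obtain ⟨zz, hz, hzx⟩ := shift_perfect hI x (isClopen_cyl x n).2 (self_mem_cyl x n)
      have hdm : ∃ m, x.1 m ≠ zz.1 m := by
        by_contra h
        push_neg at h
        exact hzx (Subtype.ext (funext fun m => (h m).symm))
      obtain ⟨m, hm⟩ := hdm
      have hnm : n < m := by
        by_contra h
        push_neg at h
        exact hm (hz m h).symm
      set c : Fin N := ⟨0, by omega⟩ with hc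
      obtain ⟨p1, hp1, w1, hw10, hw1L, hw1path⟩ := hA (x.1 m) c
      obtain ⟨p2, hp2, w2, hw20, hw2L, hw2path⟩ := hA (zz.1 m) c
      -- build extended points
      have buildWord : ∀ (v : ShiftSpace A) (pp : ℕ) (w : ℕ → Fin N), 0 < pp → w 0 = v.1 m →
          (∀ k < pp, A (w k) (w (k + 1)) = true) →
          ∃ yy : ShiftSpace A, (∀ i ≤ m, yy.1 i = v.1 i) ∧ yy.1 (m + pp) = w pp := by
        intro v pp w hpp hw0 hwpath
        have hwval : ∀ k < m + pp,
            A ((fun k => if k ≤ m then v.1 k else w (k - m)) k)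
              ((fun k => if k ≤ m then v.1 k else w (k - m)) (k + 1)) = true := by
          intro k hk
          by_cases h1 : k + 1 ≤ m
          · simp only [if_pos (by omega : k ≤ m), if_pos h1]
            exact v.2 k
          · by_cases h2 : k ≤ m
            · have hkm : k = m := by omega
              simp only [if_pos h2, if_neg h1]
              have : k + 1 - m = 1 := by omega
              rw [this, hkm, ← hw0]
              exact hwpath 0 hpp
            · simp only [if_neg h1, if_neg h2]
              have : k + 1 - m = (k - m) + 1 := by omega
              rw [this]
              exact hwpath (k - m) (by omega)
        obtain ⟨yy, hyy⟩ := exists_extension hA _ (m + pp) hwval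
        refine ⟨yy, fun i hi => ?_, ?_⟩
        · rw [hyy i (by omega)]
          simp [hi]
        · rw [hyy _ le_rfl]
          have : ¬ m + pp ≤ m := by omega
          simp only [if_neg this]
          congr 1
          omega
      obtain ⟨y, hyx, hyp⟩ := buildWord x p1 w1 hp1 hw10 hw1path
      obtain ⟨z', hzz, hzp⟩ := buildWord zz p2 w2 hp2 hw20 hw2path
      have hend : y.1 (m + p1) = z'.1 (m + p2) := by rw [hyp, hzp, hw1L, hw2L]
      have hd : cyl y (m + p1) ∩ cyl z' (m + p2) = (∅ : Set (ShiftSpace A)) := by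
        ext t
        simp only [Set.mem_inter_iff, Set.mem_empty_iff_false, iff_false, not_and]
        intro h1 h2
        have e1 : t.1 m = x.1 m := by rw [h1 m (by omega), hyx m le_rfl]
        have e2 : t.1 m = zz.1 m := by rw [h2 m (by omega), hzz m le_rfl]
        exact hm (e1 ▸ e2)
      obtain ⟨η, hηfull, hfix, hmap⟩ := swap_exists hend hd
      have hsuby : cyl y (m + p1) ⊆ cyl x n := fun t ht i hi => by
        rw [ht i (by omega), hyx i (by omega)]
      have hsubz : cyl z' (m + p2) ⊆ cyl x n := fun t ht i hi => by
        rw [ht i (by omega), hzz i (by omega), hz i hi]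
      have hηloc : η ∈ localGroup A O := by
        refine ⟨hηfull, fun t ht => hfix t fun hmem => ht ?_⟩
        rcases hmem with h | h
        · exact (hn (hsuby h)).1
        · exact (hn (hsubz h)).1
      refine ⟨y, (hn (hsuby (self_mem_cyl _ _))).2, ?_⟩
      refine Set.mem_iUnion₂.mpr ⟨η, SetLike.mem_coe.mpr hηloc, ?_⟩
      have hmoves : cyl y (m + p1) ⊆ {t | η t ≠ t} := fun t ht heq => by
        have h2 := hmap t ht
        rw [heq] at h2
        have : t ∈ cyl y (m + p1) ∩ cyl z' (m + p2) := ⟨ht, h2⟩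
        rw [hd] at this
        exact Set.notMem_empty t this
      exact interior_maximal (hmoves.trans subset_closure)
        (isClopen_cyl y (m + p1)).2 (self_mem_cyl _ _)
  exact ⟨main, fun hOc => main.trans hOc.isClosed.closure_eq⟩
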